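/- arXiv:2012.05219 — 4 statements merged into one kernel-verified Lean document; each statement's English description precedes it below -/
import Mathlib

section
/- The inter-expectile difference Δ^ex_p is convex: for integrable X, Y, λ ∈ [0,1], and p in (1/2,1), Δ^ex_p(λX + (1-λ)Y) ≤ λ·Δ^ex_p(X) + (1-λ)·Δ^ex_p(Y). -/
/-!
With the loss `ℓ_p(t) = p t⁺ - (1 - p) t⁻`, the expectile `ex_p(X)` is the unique zero of the
gap `x ↦ E[ℓ_p(X - x)]`, which is continuous and decreases at rate at least `min(p, 1 - p)`.
For `p ≥ 1/2` the loss `ℓ_p(t) = max(p t, (1 - p) t)` is convex, so the gap of `λX + (1-λ)Y` at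
`λ ex_p(X) + (1-λ) ex_p(Y)` is nonpositive, i.e. `ex_p` is convex. Since `ℓ_p(-t) = -ℓ_{1-p}(t)`,
`ex_{1-p}(X) = -ex_p(-X)`, hence `Δ^ex_p(X) = ex_p(X) + ex_p(-X)` is a sum of two convex functionals.
-/

open MeasureTheory Set

/-- The `p`-expectile of `X`, the unique solution `x` of
`p E[(X-x)_+] = (1-p) E[(X-x)_-]`. -/
noncomputable def expectile {Ω : Type*} [MeasurableSpace Ω] (μ : Measure Ω)
    (X : Ω → ℝ) (p : ℝ) : ℝ :=
  sInf {x : ℝ | p * ∫ ω, max (X ω - x) 0 ∂μ ≤ (1 - p) * ∫ ω, max (x - X ω) 0 ∂μ}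

/-- The inter-expectile difference `Δ^ex_p(X) = ex_p(X) - ex_{1-p}(X)`. -/
noncomputable def interExpectileDiff {Ω : Type*} [MeasurableSpace Ω] (μ : Measure Ω)
    (X : Ω → ℝ) (p : ℝ) : ℝ :=
  expectile μ X p - expectile μ X (1 - p)

def expectileLoss (p t : ℝ) : ℝ := p * max t 0 - (1 - p) * max (-t) 0

lemma expectileLoss_neg (p t : ℝ) : expectileLoss p (-t) = -expectileLoss (1 - p) t := by
  simp only [expectileLoss, neg_neg]
  ring

lemma expectileLoss_sub_bounds {p s t : ℝ} (hp0 : 0 ≤ p) (hp1 : p ≤ 1) (hts : t ≤ s) :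
    min p (1 - p) * (s - t) ≤ expectileLoss p s - expectileLoss p t ∧
      expectileLoss p s - expectileLoss p t ≤ s - t := by
  have hmin := min_le_left p (1 - p)
  have hmin' := min_le_right p (1 - p)
  unfold expectileLoss
  rcases le_total s 0 with hs | hs <;> rcases le_total t 0 with ht | ht <;>
    simp only [max_eq_left, max_eq_right, hs, ht, neg_nonneg, neg_nonpos] <;>
    constructor <;> nlinarith

lemma expectileLoss_eq_max {p : ℝ} (hp : 1 / 2 ≤ p) (t : ℝ) :
    expectileLoss p t = max (p * t) ((1 - p) * t) := by
  unfold expectileLoss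
  rcases le_total t 0 with h | h
  · rw [max_eq_right h, max_eq_left (by linarith), max_eq_right (by nlinarith)]
    ring
  · rw [max_eq_left h, max_eq_right (by linarith), max_eq_left (by nlinarith)]
    ring

lemma convexOn_expectileLoss {p : ℝ} (hp : 1 / 2 ≤ p) : ConvexOn ℝ univ (expectileLoss p) := by
  have hlin : ∀ c : ℝ, ConvexOn ℝ univ (fun t : ℝ => c * t) := fun c =>
    (LinearMap.mulLeft ℝ c).convexOn convex_univ
  rw [show expectileLoss p = fun t => max (p * t) ((1 - p) * t) from
    funext (expectileLoss_eq_max hp)]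
  exact (hlin p).sup (hlin (1 - p))

section Gap

variable {Ω : Type*} [MeasurableSpace Ω] {μ : Measure Ω} {X : Ω → ℝ} {p : ℝ}

noncomputable def expectileGap (μ : Measure Ω) (X : Ω → ℝ) (p x : ℝ) : ℝ :=
  ∫ ω, expectileLoss p (X ω - x) ∂μ

lemma integrable_expectileLoss [IsFiniteMeasure μ] (hX : Integrable X μ) (p x : ℝ) :
    Integrable (fun ω => expectileLoss p (X ω - x)) μ := by
  simp only [expectileLoss, neg_sub]
  exact ((hX.sub (integrable_const x)).pos_part.const_mul p).sub
    (((integrable_const x).sub hX).pos_part.const_mul (1 - p))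

lemma expectile_eq_sInf_expectileGap [IsFiniteMeasure μ] (hX : Integrable X μ) (p : ℝ) :
    expectile μ X p = sInf {x | expectileGap μ X p x ≤ 0} := by
  unfold expectile expectileGap expectileLoss
  congr 1
  ext x
  have hpos : Integrable (fun ω => max (X ω - x) 0) μ := (hX.sub (integrable_const x)).pos_part
  have hneg : Integrable (fun ω => max (x - X ω) 0) μ := ((integrable_const x).sub hX).pos_part
  simp only [mem_ofPred_eq, neg_sub]
  rw [integral_sub (hpos.const_mul p) (hneg.const_mul (1 - p)), integral_const_mul,
    integral_const_mul, sub_nonpos]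

lemma expectileGap_sub_bounds [IsProbabilityMeasure μ] (hX : Integrable X μ)
    (hp0 : 0 ≤ p) (hp1 : p ≤ 1) {x y : ℝ} (hxy : x ≤ y) :
    min p (1 - p) * (y - x) ≤ expectileGap μ X p x - expectileGap μ X p y ∧
      expectileGap μ X p x - expectileGap μ X p y ≤ y - x := by
  have hsub : expectileGap μ X p x - expectileGap μ X p y =
      ∫ ω, (expectileLoss p (X ω - x) - expectileLoss p (X ω - y)) ∂μ :=
    (integral_sub (integrable_expectileLoss hX p x) (integrable_expectileLoss hX p y)).symm
  have hint := (integrable_expectileLoss hX p x).sub (integrable_expectileLoss hX p y)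
  have hbounds ω := expectileLoss_sub_bounds hp0 hp1 (sub_le_sub_left hxy (X ω))
  simp only [sub_sub_sub_cancel_left] at hbounds
  rw [hsub]
  constructor
  · simpa using integral_mono (integrable_const _) hint fun ω => (hbounds ω).1
  · simpa using integral_mono hint (integrable_const _) fun ω => (hbounds ω).2

lemma lipschitzWith_expectileGap [IsProbabilityMeasure μ] (hX : Integrable X μ)
    (hp0 : 0 ≤ p) (hp1 : p ≤ 1) : LipschitzWith 1 (expectileGap μ X p) := by
  refine LipschitzWith.of_le_add_mul 1 fun x y => ?_
  rw [NNReal.coe_one, one_mul, Real.dist_eq]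
  rcases le_total x y with hxy | hyx
  · rw [abs_of_nonpos (sub_nonpos.2 hxy)]
    linarith [(expectileGap_sub_bounds hX hp0 hp1 hxy).2]
  · have hc : 0 ≤ min p (1 - p) := le_min hp0 (sub_nonneg.2 hp1)
    linarith [(expectileGap_sub_bounds hX hp0 hp1 hyx).1, mul_nonneg hc (sub_nonneg.2 hyx),
      abs_nonneg (x - y)]

lemma strictAnti_expectileGap [IsProbabilityMeasure μ] (hX : Integrable X μ)
    (hp0 : 0 < p) (hp1 : p < 1) : StrictAnti (expectileGap μ X p) := fun x y hxy => by
  have hc : 0 < min p (1 - p) := lt_min hp0 (sub_pos.2 hp1)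
  linarith [(expectileGap_sub_bounds hX hp0.le hp1.le hxy.le).1, mul_pos hc (sub_pos.2 hxy)]

lemma exists_expectileGap_eq_zero [IsProbabilityMeasure μ] (hX : Integrable X μ)
    (hp0 : 0 < p) (hp1 : p < 1) : ∃ z, expectileGap μ X p z = 0 := by
  set c := min p (1 - p)
  have hc : 0 < c := lt_min hp0 (sub_pos.2 hp1)
  set r := |expectileGap μ X p 0| / c
  have hr : 0 ≤ r := div_nonneg (abs_nonneg _) hc.le
  have hcr : c * r = |expectileGap μ X p 0| := mul_div_cancel₀ _ hc.ne'
  -- the gap decreases at rate at least `c`, so it changes sign on `[-r, r]`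
  have hleft := (expectileGap_sub_bounds hX hp0.le hp1.le (neg_nonpos.2 hr)).1
  have hright := (expectileGap_sub_bounds hX hp0.le hp1.le hr).1
  obtain ⟨z, -, hz⟩ := intermediate_value_Icc' (neg_le_self hr)
    (lipschitzWith_expectileGap hX hp0.le hp1.le).continuous.continuousOn
    (show (0 : ℝ) ∈ Icc _ _ from ⟨by linarith [le_abs_self (expectileGap μ X p 0)],
      by linarith [neg_abs_le (expectileGap μ X p 0)]⟩)
  exact ⟨z, hz⟩

lemma expectile_eq_of_expectileGap_eq_zero [IsProbabilityMeasure μ] (hX : Integrable X μ)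
    (hp0 : 0 < p) (hp1 : p < 1) {z : ℝ} (hz : expectileGap μ X p z = 0) :
    expectile μ X p = z := by
  have hset : {x | expectileGap μ X p x ≤ 0} = Ici z := by
    ext x
    rw [mem_ofPred_eq, mem_Ici, ← hz, (strictAnti_expectileGap hX hp0 hp1).le_iff_ge]
  rw [expectile_eq_sInf_expectileGap hX, hset, csInf_Ici]

lemma expectileGap_expectile [IsProbabilityMeasure μ] (hX : Integrable X μ)
    (hp0 : 0 < p) (hp1 : p < 1) : expectileGap μ X p (expectile μ X p) = 0 := by
  obtain ⟨z, hz⟩ := exists_expectileGap_eq_zero hX hp0 hp1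
  rwa [expectile_eq_of_expectileGap_eq_zero hX hp0 hp1 hz]

lemma expectile_le_of_expectileGap_nonpos [IsProbabilityMeasure μ] (hX : Integrable X μ)
    (hp0 : 0 < p) (hp1 : p < 1) {z : ℝ} (hz : expectileGap μ X p z ≤ 0) :
    expectile μ X p ≤ z := by
  rwa [← expectileGap_expectile hX hp0 hp1, (strictAnti_expectileGap hX hp0 hp1).le_iff_ge] at hz

lemma expectileGap_neg (μ : Measure Ω) (X : Ω → ℝ) (p x : ℝ) :
    expectileGap μ (-X) p (-x) = -expectileGap μ X (1 - p) x := by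
  simp only [expectileGap, Pi.neg_apply, neg_sub_neg, ← neg_sub (X _), expectileLoss_neg,
    integral_neg]

lemma expectile_neg [IsProbabilityMeasure μ] (hX : Integrable X μ) (hp0 : 0 < p) (hp1 : p < 1) :
    expectile μ (-X) p = -expectile μ X (1 - p) := by
  refine expectile_eq_of_expectileGap_eq_zero hX.neg hp0 hp1 ?_
  rw [expectileGap_neg, expectileGap_expectile hX (sub_pos.2 hp1) (by linarith), neg_zero]

end Gap

section Convexity

variable {Ω : Type*} [MeasurableSpace Ω] {μ : Measure Ω} {p : ℝ}

lemma convex_setOf_integrable : Convex ℝ {X : Ω → ℝ | Integrable X μ} :=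
  fun _ hX _ hY a b _ _ _ => (hX.smul a).add (hY.smul b)

lemma expectileGap_smul_add_le [IsFiniteMeasure μ] (hp : 1 / 2 ≤ p) {X Y : Ω → ℝ}
    (hX : Integrable X μ) (hY : Integrable Y μ) {a b : ℝ} (ha : 0 ≤ a) (hb : 0 ≤ b)
    (hab : a + b = 1) (x y : ℝ) :
    expectileGap μ (a • X + b • Y) p (a * x + b * y) ≤
      a * expectileGap μ X p x + b * expectileGap μ Y p y := by
  have hX' := integrable_expectileLoss hX p x
  have hY' := integrable_expectileLoss hY p y
  have hpoint ω : expectileLoss p ((a • X + b • Y) ω - (a * x + b * y)) ≤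
      a * expectileLoss p (X ω - x) + b * expectileLoss p (Y ω - y) := by
    have hsplit : (a • X + b • Y) ω - (a * x + b * y) = a • (X ω - x) + b • (Y ω - y) := by
      simp only [Pi.add_apply, Pi.smul_apply, smul_eq_mul]
      ring
    rw [hsplit]
    exact (convexOn_expectileLoss hp).2 (mem_univ _) (mem_univ _) ha hb hab
  calc expectileGap μ (a • X + b • Y) p (a * x + b * y)
      ≤ ∫ ω, (a * expectileLoss p (X ω - x) + b * expectileLoss p (Y ω - y)) ∂μ :=
        integral_mono (integrable_expectileLoss ((hX.smul a).add (hY.smul b)) p _)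
          ((hX'.const_mul a).add (hY'.const_mul b)) hpoint
    _ = a * expectileGap μ X p x + b * expectileGap μ Y p y := by
        rw [integral_add (hX'.const_mul a) (hY'.const_mul b), integral_const_mul,
          integral_const_mul, expectileGap, expectileGap]

lemma convexOn_expectile [IsProbabilityMeasure μ] (hp : 1 / 2 ≤ p) (hp1 : p < 1) :
    ConvexOn ℝ {X : Ω → ℝ | Integrable X μ} (fun X => expectile μ X p) := by
  refine ⟨convex_setOf_integrable, fun X hX Y hY a b ha hb hab => ?_⟩
  have hp0 : 0 < p := by linarith
  refine expectile_le_of_expectileGap_nonpos ((hX.smul a).add (hY.smul b)) hp0 hp1 ?_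
  calc _ ≤ a * expectileGap μ X p (expectile μ X p) + b * expectileGap μ Y p (expectile μ Y p) :=
        expectileGap_smul_add_le hp hX hY ha hb hab _ _
    _ = 0 := by
        rw [expectileGap_expectile hX hp0 hp1, expectileGap_expectile hY hp0 hp1]
        ring

lemma convexOn_interExpectileDiff [IsProbabilityMeasure μ] (hp : p ∈ Ioo (1 / 2 : ℝ) 1) :
    ConvexOn ℝ {X : Ω → ℝ | Integrable X μ} (fun X => interExpectileDiff μ X p) := by
  have hconv := convexOn_expectile (μ := μ) hp.1.le hp.2
  have hneg := hconv.comp_linearMap (-LinearMap.id)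
  have hpre : (-LinearMap.id : (Ω → ℝ) →ₗ[ℝ] Ω → ℝ) ⁻¹' {X | Integrable X μ} =
      {X | Integrable X μ} := by
    ext X
    simp only [mem_preimage, LinearMap.neg_apply, LinearMap.id_apply, mem_ofPred_eq,
      integrable_neg_iff]
  rw [hpre] at hneg
  refine (hconv.add hneg).congr fun X hX => ?_
  simp only [Pi.add_apply, Function.comp_apply, LinearMap.neg_apply, LinearMap.id_apply,
    interExpectileDiff, expectile_neg hX (by linarith [hp.1]) hp.2]
  ring

end Convexity

theorem interExpectileDiff_convex_general {Ω : Type*} [MeasurableSpace Ω] (μ : Measure Ω)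
    [IsProbabilityMeasure μ] (X Y : Ω → ℝ)
    (hX : Integrable X μ) (hY : Integrable Y μ)
    (l : ℝ) (hl : l ∈ Icc (0:ℝ) 1) (p : ℝ) (hp : p ∈ Ioo (1/2 : ℝ) 1) :
    interExpectileDiff μ (fun ω => l * X ω + (1 - l) * Y ω) p
      ≤ l * interExpectileDiff μ X p + (1 - l) * interExpectileDiff μ Y p :=
  (convexOn_interExpectileDiff hp).2 hX hY hl.1 (sub_nonneg.2 hl.2) (add_sub_cancel l 1)

/-- `Δ^ex_p` is convex: for integrable `X, Y`, `λ ∈ [0,1]` and `p ∈ (1/2,1)`,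
`Δ^ex_p(λX + (1-λ)Y) ≤ λ Δ^ex_p(X) + (1-λ) Δ^ex_p(Y)`. -/
theorem interExpectileDiff_convex {Ω : Type*} [MeasurableSpace Ω] (μ : Measure Ω)
    [IsProbabilityMeasure μ] (X Y : Ω → ℝ) (hXm : Measurable X) (hYm : Measurable Y)
    (hX : Integrable X μ) (hY : Integrable Y μ)
    (l : ℝ) (hl : l ∈ Icc (0:ℝ) 1) (p : ℝ) (hp : p ∈ Ioo (1/2 : ℝ) 1) :
    interExpectileDiff μ (fun ω => l * X ω + (1 - l) * Y ω) p
      ≤ l * interExpectileDiff μ X p + (1 - l) * interExpectileDiff μ Y p :=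
  interExpectileDiff_convex_general μ X Y hX hY l hl p hp
end

section
/- If X1 and X2 are integrable random variables with symmetric distributions and Δ^ex_p(X1) = Δ^ex_p(X2) for all p in (1/2,1), then X1 and X2 have the same distribution. -/
open MeasureTheory Set

/-!
For `0 < q < 1`, `ex_q(X)` is the unique root of the strictly decreasing function
`q E[(X - x)_+] - (1 - q) E[(x - X)_+]`. For symmetric `X` with stop-loss transform
`π(x) = E[(X - x)_+]` one has `E[(x - X)_+] = π(-x) = π(x) + x`, so `ex_{1-q} = -ex_q` and the root
equation becomes `(2q - 1) π(ex_q) = (1 - q) ex_q`. Thus `Δ^ex_p = 2 ex_p` for `p ∈ (1/2, 1)`, and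
each `x > 0` with `π(x) > 0` equals `ex_p` for the `p` solving `(2p - 1) π(x) = (1 - p) x`; so the
two stop-loss transforms agree on `(0, ∞)`, hence everywhere by continuity and `π(-x) = π(x) + x`.
The law is recovered from `π` because `n (π(x) - π(x + 1/n)) → P(X > x)`.
-/

open Filter Topology

namespace Expectile

variable {Ω : Type*} [MeasurableSpace Ω] {μ : Measure Ω} {X : Ω → ℝ}

variable (μ X) in
noncomputable def stopLoss (x : ℝ) : ℝ := ∫ ω, max (X ω - x) 0 ∂μ

variable (μ X) in
noncomputable def lowerStopLoss (x : ℝ) : ℝ := ∫ ω, max (x - X ω) 0 ∂μ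

variable (μ X) in
/-- `expectile μ X q` is the infimum of the sublevel set `{x | expectileGap μ X q x ≤ 0}`. -/
noncomputable def expectileGap (q x : ℝ) : ℝ :=
  q * stopLoss μ X x - (1 - q) * lowerStopLoss μ X x

lemma stopLoss_nonneg (x : ℝ) : 0 ≤ stopLoss μ X x :=
  integral_nonneg fun _ => le_max_right _ _

section FiniteMeasure

variable [IsFiniteMeasure μ]

lemma integrable_max_sub_const (hX : Integrable X μ) (x : ℝ) :
    Integrable (fun ω => max (X ω - x) 0) μ :=
  (hX.sub (integrable_const x)).pos_part

lemma integrable_max_const_sub (hX : Integrable X μ) (x : ℝ) :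
    Integrable (fun ω => max (x - X ω) 0) μ :=
  ((integrable_const x).sub hX).pos_part

lemma antitone_stopLoss (hX : Integrable X μ) : Antitone (stopLoss μ X) := fun _ _ hxy =>
  integral_mono (integrable_max_sub_const hX _) (integrable_max_sub_const hX _)
    fun _ => max_le_max (by linarith) le_rfl

end FiniteMeasure

section ProbabilityMeasure

variable [IsProbabilityMeasure μ]

lemma lowerStopLoss_eq_stopLoss_add_sub_integral (hX : Integrable X μ) (x : ℝ) :
    lowerStopLoss μ X x = stopLoss μ X x + x - ∫ ω, X ω ∂μ := by
  have hpart : ∀ ω, max (x - X ω) 0 - max (X ω - x) 0 = x - X ω := fun ω => by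
    simpa only [neg_sub] using max_zero_sub_max_neg_zero_eq_self (x - X ω)
  have := integral_sub (integrable_max_const_sub hX x) (integrable_max_sub_const hX x)
  simp only [hpart, integral_sub (integrable_const x) hX, integral_const, probReal_univ,
    one_smul] at this
  rw [lowerStopLoss, stopLoss]
  linarith

lemma lipschitzWith_stopLoss (hX : Integrable X μ) : LipschitzWith 1 (stopLoss μ X) := by
  refine LipschitzWith.of_dist_le_mul fun x y => ?_
  unfold stopLoss
  have hbound : ∀ ω, ‖max (X ω - x) 0 - max (X ω - y) 0‖ ≤ |x - y| := fun ω => by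
    simpa only [Real.norm_eq_abs, sub_sub_sub_cancel_left, abs_sub_comm y x] using
      abs_max_sub_max_le_abs (X ω - x) (X ω - y) 0
  have := norm_integral_le_of_norm_le_const (μ := μ) (ae_of_all _ hbound)
  rw [integral_sub (integrable_max_sub_const hX x) (integrable_max_sub_const hX y),
    probReal_univ, mul_one] at this
  simpa only [NNReal.coe_one, one_mul, Real.dist_eq, Real.norm_eq_abs] using this

lemma expectileGap_sub_ge (hX : Integrable X μ) {q x y : ℝ} (hxy : x ≤ y) :
    min q (1 - q) * (y - x) ≤ expectileGap μ X q x - expectileGap μ X q y := by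
  have hdrop : 0 ≤ stopLoss μ X x - stopLoss μ X y := sub_nonneg.2 (antitone_stopLoss hX hxy)
  have hslope : stopLoss μ X x - stopLoss μ X y ≤ y - x := by
    simpa [Real.dist_eq, abs_of_nonneg hdrop, abs_of_nonpos (sub_nonpos.2 hxy)] using
      (lipschitzWith_stopLoss hX).dist_le_mul x y
  simp only [expectileGap, lowerStopLoss_eq_stopLoss_add_sub_integral hX]
  nlinarith [mul_le_mul_of_nonneg_right (min_le_left q (1 - q)) hdrop,
    mul_le_mul_of_nonneg_right (min_le_right q (1 - q)) (sub_nonneg.2 hslope)]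

lemma strictAnti_expectileGap (hX : Integrable X μ) {q : ℝ} (hq : q ∈ Ioo 0 1) :
    StrictAnti (expectileGap μ X q) := fun x y hxy => by
  have hpos : 0 < min q (1 - q) := lt_min hq.1 (sub_pos.2 hq.2)
  have := expectileGap_sub_ge hX (q := q) hxy.le
  nlinarith

lemma continuous_expectileGap (hX : Integrable X μ) (q : ℝ) :
    Continuous (expectileGap μ X q) := by
  have := (lipschitzWith_stopLoss hX).continuous
  have hG : expectileGap μ X q = fun x =>
      q * stopLoss μ X x - (1 - q) * (stopLoss μ X x + x - ∫ ω, X ω ∂μ) :=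
    funext fun x => by rw [expectileGap, lowerStopLoss_eq_stopLoss_add_sub_integral hX]
  rw [hG]
  fun_prop

lemma exists_expectileGap_eq_zero (hX : Integrable X μ) {q : ℝ} (hq : q ∈ Ioo 0 1) :
    ∃ e, expectileGap μ X q e = 0 := by
  set G := expectileGap μ X q
  set c := min q (1 - q)
  have hc : 0 < c := lt_min hq.1 (sub_pos.2 hq.2)
  set r := |G 0| / c
  have hr : 0 ≤ r := div_nonneg (abs_nonneg _) hc.le
  have hcr : c * r = |G 0| := mul_div_cancel₀ _ hc.ne'
  have hleft : 0 ≤ G (-r) := by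
    have := expectileGap_sub_ge hX (q := q) (neg_nonpos.2 hr)
    have := neg_abs_le (G 0)
    simp only [sub_neg_eq_add, zero_add] at *
    linarith
  have hright : G r ≤ 0 := by
    have := expectileGap_sub_ge hX (q := q) hr
    have := le_abs_self (G 0)
    simp only [sub_zero] at *
    linarith
  obtain ⟨e, -, he⟩ := intermediate_value_Icc' (by linarith)
    (continuous_expectileGap hX q).continuousOn ⟨hright, hleft⟩
  exact ⟨e, he⟩

theorem expectile_eq_iff (hX : Integrable X μ) {q e : ℝ} (hq : q ∈ Ioo 0 1) :
    expectile μ X q = e ↔ q * stopLoss μ X e = (1 - q) * lowerStopLoss μ X e := by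
  obtain ⟨e₀, he₀⟩ := exists_expectileGap_eq_zero hX hq
  have hanti := strictAnti_expectileGap hX hq
  have hset : {x : ℝ | q * ∫ ω, max (X ω - x) 0 ∂μ ≤ (1 - q) * ∫ ω, max (x - X ω) 0 ∂μ}
      = Ici e₀ := by
    ext x
    have := hanti.le_iff_ge (a := x) (b := e₀)
    rw [he₀, expectileGap, sub_nonpos] at this
    exact this
  rw [expectile, hset, csInf_Ici, ← sub_eq_zero (a := q * _)]
  change _ ↔ expectileGap μ X q e = 0
  rw [← he₀]
  exact eq_comm.trans hanti.injective.eq_iff.symm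

end ProbabilityMeasure

section Symmetric

lemma integral_comp_eq_integral_comp_neg (hX : AEMeasurable X μ)
    (hsym : Measure.map X μ = Measure.map (fun ω => -X ω) μ) {g : ℝ → ℝ} (hg : Continuous g) :
    ∫ ω, g (X ω) ∂μ = ∫ ω, g (-X ω) ∂μ := by
  rw [← integral_map hX hg.aestronglyMeasurable, hsym,
    integral_map (φ := fun ω => -X ω) hX.neg hg.aestronglyMeasurable]

lemma integral_eq_zero_of_symm (hX : AEMeasurable X μ)
    (hsym : Measure.map X μ = Measure.map (fun ω => -X ω) μ) : ∫ ω, X ω ∂μ = 0 := by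
  have := integral_comp_eq_integral_comp_neg hX hsym continuous_id
  simp only [id_eq, integral_neg] at this
  linarith

lemma lowerStopLoss_eq_stopLoss_neg (hX : AEMeasurable X μ)
    (hsym : Measure.map X μ = Measure.map (fun ω => -X ω) μ) (x : ℝ) :
    lowerStopLoss μ X x = stopLoss μ X (-x) := by
  rw [lowerStopLoss, integral_comp_eq_integral_comp_neg hX hsym (g := fun t => max (x - t) 0)
    (by fun_prop), stopLoss]
  simp only [sub_neg_eq_add, add_comm x]

variable [IsProbabilityMeasure μ]

lemma lowerStopLoss_eq_stopLoss_add_of_symm (hX : Integrable X μ)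
    (hsym : Measure.map X μ = Measure.map (fun ω => -X ω) μ) (x : ℝ) :
    lowerStopLoss μ X x = stopLoss μ X x + x := by
  rw [lowerStopLoss_eq_stopLoss_add_sub_integral hX, integral_eq_zero_of_symm hX.aemeasurable hsym,
    sub_zero]

lemma stopLoss_neg_of_symm (hX : Integrable X μ)
    (hsym : Measure.map X μ = Measure.map (fun ω => -X ω) μ) (x : ℝ) :
    stopLoss μ X (-x) = stopLoss μ X x + x := by
  rw [← lowerStopLoss_eq_stopLoss_neg hX.aemeasurable hsym,
    lowerStopLoss_eq_stopLoss_add_of_symm hX hsym]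

lemma expectile_one_sub_of_symm (hX : Integrable X μ)
    (hsym : Measure.map X μ = Measure.map (fun ω => -X ω) μ) {q : ℝ} (hq : q ∈ Ioo 0 1) :
    expectile μ X (1 - q) = -expectile μ X q := by
  have hq' : 1 - q ∈ Ioo (0 : ℝ) 1 := ⟨sub_pos.2 hq.2, sub_lt_self 1 hq.1⟩
  rw [expectile_eq_iff hX hq', sub_sub_cancel,
    lowerStopLoss_eq_stopLoss_neg hX.aemeasurable hsym, neg_neg,
    ← lowerStopLoss_eq_stopLoss_neg hX.aemeasurable hsym]
  exact ((expectile_eq_iff hX hq).1 rfl).symm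

lemma expectile_eq_iff_of_symm (hX : Integrable X μ)
    (hsym : Measure.map X μ = Measure.map (fun ω => -X ω) μ) {q e : ℝ} (hq : q ∈ Ioo 0 1) :
    expectile μ X q = e ↔ (2 * q - 1) * stopLoss μ X e = (1 - q) * e := by
  rw [expectile_eq_iff hX hq, lowerStopLoss_eq_stopLoss_add_of_symm hX hsym]
  constructor <;> intro h <;> linarith

end Symmetric

lemma exists_mem_Ioo_balance {x s : ℝ} (hx : 0 < x) (hs : 0 < s) :
    ∃ p ∈ Ioo (1 / 2 : ℝ) 1, (2 * p - 1) * s = (1 - p) * x := by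
  have hd : 0 < x + 2 * s := by linarith
  refine ⟨(x + s) / (x + 2 * s), ⟨?_, ?_⟩, ?_⟩
  · rw [lt_div_iff₀ hd]; linarith
  · rw [div_lt_one hd]; linarith
  · field_simp
    ring

section TwoSymmetric

variable [IsProbabilityMeasure μ] {Y : Ω → ℝ}

lemma stopLoss_eq_of_expectile_eq_of_pos (hX : Integrable X μ) (hY : Integrable Y μ)
    (hsymX : Measure.map X μ = Measure.map (fun ω => -X ω) μ)
    (hsymY : Measure.map Y μ = Measure.map (fun ω => -Y ω) μ)
    (h : ∀ p ∈ Ioo (1 / 2 : ℝ) 1, expectile μ X p = expectile μ Y p)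
    {x : ℝ} (hx : 0 < x) (hs : 0 < stopLoss μ X x) :
    stopLoss μ Y x = stopLoss μ X x := by
  obtain ⟨p, hp, hbal⟩ := exists_mem_Ioo_balance hx hs
  have hp' : p ∈ Ioo (0 : ℝ) 1 := ⟨by linarith [hp.1], hp.2⟩
  have hXp : expectile μ X p = x := (expectile_eq_iff_of_symm hX hsymX hp').2 hbal
  have hYbal := (expectile_eq_iff_of_symm hY hsymY hp').1 ((h p hp).symm.trans hXp)
  have h2p : 2 * p - 1 ≠ 0 := by linarith [hp.1]
  exact mul_left_cancel₀ h2p (hYbal.trans hbal.symm)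

theorem stopLoss_eq_of_expectile_eq (hX : Integrable X μ) (hY : Integrable Y μ)
    (hsymX : Measure.map X μ = Measure.map (fun ω => -X ω) μ)
    (hsymY : Measure.map Y μ = Measure.map (fun ω => -Y ω) μ)
    (h : ∀ p ∈ Ioo (1 / 2 : ℝ) 1, expectile μ X p = expectile μ Y p) :
    stopLoss μ X = stopLoss μ Y := by
  have hpos : EqOn (stopLoss μ X) (stopLoss μ Y) (Ioi 0) := fun x hx => by
    rcases (stopLoss_nonneg (μ := μ) (X := X) x).lt_or_eq with hX0 | hX0
    · exact (stopLoss_eq_of_expectile_eq_of_pos hX hY hsymX hsymY h hx hX0).symm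
    rcases (stopLoss_nonneg (μ := μ) (X := Y) x).lt_or_eq with hY0 | hY0
    · exact stopLoss_eq_of_expectile_eq_of_pos hY hX hsymY hsymX (fun p hp => (h p hp).symm)
        hx hY0
    · rw [← hX0, ← hY0]
  have hnonneg : EqOn (stopLoss μ X) (stopLoss μ Y) (Ici 0) := by
    simpa only [closure_Ioi] using
      hpos.closure (lipschitzWith_stopLoss hX).continuous (lipschitzWith_stopLoss hY).continuous
  funext x
  rcases le_total 0 x with hx | hx
  · exact hnonneg hx
  · have hX' := stopLoss_neg_of_symm hX hsymX (-x)
    have hY' := stopLoss_neg_of_symm hY hsymY (-x)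
    rw [neg_neg] at hX' hY'
    linarith [hnonneg (neg_nonneg.2 hx)]

end TwoSymmetric

lemma abs_natCast_mul_max_sub_max_le_one (n : ℕ) (x t : ℝ) :
    |(n : ℝ) * (max (t - x) 0 - max (t - (x + (n : ℝ)⁻¹)) 0)| ≤ 1 := by
  rcases Nat.eq_zero_or_pos n with rfl | hn
  · simp
  have hn' : (0 : ℝ) < n := Nat.cast_pos.2 hn
  have hdiff := abs_max_sub_max_le_abs (t - x) (t - (x + (n : ℝ)⁻¹)) 0
  rw [sub_sub_sub_cancel_left, add_sub_cancel_left, abs_inv, Nat.abs_cast] at hdiff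
  rw [abs_mul, Nat.abs_cast]
  calc (n : ℝ) * |max (t - x) 0 - max (t - (x + (n : ℝ)⁻¹)) 0| ≤ n * (n : ℝ)⁻¹ :=
        mul_le_mul_of_nonneg_left hdiff hn'.le
    _ = 1 := mul_inv_cancel₀ hn'.ne'

lemma tendsto_natCast_mul_max_sub_max (x t : ℝ) :
    Tendsto (fun n : ℕ => (n : ℝ) * (max (t - x) 0 - max (t - (x + (n : ℝ)⁻¹)) 0)) atTop
      (𝓝 ((Ioi x).indicator 1 t)) := by
  rcases le_or_gt t x with htx | htx
  · have hzero : ∀ n : ℕ, (n : ℝ) * (max (t - x) 0 - max (t - (x + (n : ℝ)⁻¹)) 0) = 0 := by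
      intro n
      have hinv : (0 : ℝ) ≤ (n : ℝ)⁻¹ := inv_nonneg.2 n.cast_nonneg
      rw [max_eq_right (by linarith), max_eq_right (by linarith)]
      ring
    simp only [hzero, indicator_of_notMem (notMem_Ioi.2 htx)]
    exact tendsto_const_nhds
  · rw [indicator_of_mem (mem_Ioi.2 htx), Pi.one_apply]
    obtain ⟨N, hN⟩ := exists_nat_one_div_lt (sub_pos.2 htx)
    refine tendsto_const_nhds.congr' (eventually_atTop.2 ⟨N + 1, fun n hNn => ?_⟩)
    have hn : (0 : ℝ) < n := by exact_mod_cast (Nat.succ_pos N).trans_le hNn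
    have hsmall : (n : ℝ)⁻¹ < t - x := by
      calc (n : ℝ)⁻¹ ≤ 1 / ((N : ℝ) + 1) := by
            rw [one_div]; exact inv_anti₀ (by positivity) (by exact_mod_cast hNn)
        _ < t - x := hN
    dsimp only
    rw [max_eq_left (by linarith), max_eq_left (by linarith)]
    field_simp
    ring

lemma tendsto_slope_stopLoss [IsProbabilityMeasure μ] (hX : Integrable X μ) (x : ℝ) :
    Tendsto (fun n : ℕ => (n : ℝ) * (stopLoss μ X x - stopLoss μ X (x + (n : ℝ)⁻¹))) atTop
      (𝓝 ((μ.map X).real (Ioi x))) := by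
  have hslope : ∀ n : ℕ, (n : ℝ) * (stopLoss μ X x - stopLoss μ X (x + (n : ℝ)⁻¹)) =
      ∫ ω, (n : ℝ) * (max (X ω - x) 0 - max (X ω - (x + (n : ℝ)⁻¹)) 0) ∂μ := fun n => by
    rw [integral_const_mul, integral_sub (integrable_max_sub_const hX _)
      (integrable_max_sub_const hX _), stopLoss, stopLoss]
  have htail : ∫ ω, (Ioi x).indicator 1 (X ω) ∂μ = (μ.map X).real (Ioi x) := by
    rw [← integral_map hX.aemeasurable
      ((measurable_one.indicator measurableSet_Ioi).aestronglyMeasurable),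
      integral_indicator_one measurableSet_Ioi]
  simp only [hslope, ← htail]
  refine tendsto_integral_of_dominated_convergence (fun _ => 1) (fun n => ?_)
    (integrable_const 1) (fun n => ae_of_all _ fun ω => ?_)
    (ae_of_all _ fun ω => tendsto_natCast_mul_max_sub_max x (X ω))
  · exact ((integrable_max_sub_const hX _).sub (integrable_max_sub_const hX _)).const_mul _
      |>.aestronglyMeasurable
  · exact (Real.norm_eq_abs _).trans_le (abs_natCast_mul_max_sub_max_le_one n x (X ω))

theorem map_eq_of_stopLoss_eq [IsProbabilityMeasure μ] {Y : Ω → ℝ} (hX : Integrable X μ)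
    (hY : Integrable Y μ) (h : stopLoss μ X = stopLoss μ Y) : μ.map X = μ.map Y := by
  have : IsProbabilityMeasure (μ.map X) := Measure.isProbabilityMeasure_map hX.aemeasurable
  have : IsProbabilityMeasure (μ.map Y) := Measure.isProbabilityMeasure_map hY.aemeasurable
  have htail : ∀ x, (μ.map X).real (Ioi x) = (μ.map Y).real (Ioi x) := fun x =>
    tendsto_nhds_unique (tendsto_slope_stopLoss hX x) (h ▸ tendsto_slope_stopLoss hY x)
  refine Measure.ext_of_Iic _ _ fun a => ?_
  rw [← compl_Ioi, prob_compl_eq_one_sub measurableSet_Ioi,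
    prob_compl_eq_one_sub measurableSet_Ioi, (measureReal_eq_measureReal_iff).1 (htail a)]

end Expectile

theorem interExpectileDiff_determines_symmetric_general {Ω : Type*} [MeasurableSpace Ω]
    (μ : Measure Ω) [IsProbabilityMeasure μ]
    (X₁ X₂ : Ω → ℝ)
    (hX₁ : Integrable X₁ μ) (hX₂ : Integrable X₂ μ)
    (hsym₁ : Measure.map X₁ μ = Measure.map (fun ω => -X₁ ω) μ)
    (hsym₂ : Measure.map X₂ μ = Measure.map (fun ω => -X₂ ω) μ)
    (h : ∀ p ∈ Ioo (1/2 : ℝ) 1,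
      expectile μ X₁ p - expectile μ X₁ (1 - p)
        = expectile μ X₂ p - expectile μ X₂ (1 - p)) :
    Measure.map X₁ μ = Measure.map X₂ μ := by
  have hexp : ∀ p ∈ Ioo (1/2 : ℝ) 1, expectile μ X₁ p = expectile μ X₂ p := fun p hp => by
    have hp' : p ∈ Ioo (0 : ℝ) 1 := ⟨by linarith [hp.1], hp.2⟩
    have := h p hp
    rw [Expectile.expectile_one_sub_of_symm hX₁ hsym₁ hp',
      Expectile.expectile_one_sub_of_symm hX₂ hsym₂ hp'] at this
    linarith
  exact Expectile.map_eq_of_stopLoss_eq hX₁ hX₂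
    (Expectile.stopLoss_eq_of_expectile_eq hX₁ hX₂ hsym₁ hsym₂ hexp)

/-- If `X₁, X₂` are integrable, symmetrically distributed, and have the same
inter-expectile difference `Δ^ex_p = ex_p - ex_{1-p}` for all `p ∈ (1/2,1)`,
then they have the same distribution. -/
theorem interExpectileDiff_determines_symmetric {Ω : Type*} [MeasurableSpace Ω]
    (μ : Measure Ω) [IsProbabilityMeasure μ]
    (X₁ X₂ : Ω → ℝ) (hX₁m : Measurable X₁) (hX₂m : Measurable X₂)
    (hX₁ : Integrable X₁ μ) (hX₂ : Integrable X₂ μ)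
    (hsym₁ : Measure.map X₁ μ = Measure.map (fun ω => -X₁ ω) μ)
    (hsym₂ : Measure.map X₂ μ = Measure.map (fun ω => -X₂ ω) μ)
    (h : ∀ p ∈ Ioo (1/2 : ℝ) 1,
      expectile μ X₁ p - expectile μ X₁ (1 - p)
        = expectile μ X₂ p - expectile μ X₂ (1 - p)) :
    Measure.map X₁ μ = Measure.map X₂ μ :=
  interExpectileDiff_determines_symmetric_general μ X₁ X₂ hX₁ hX₂ hsym₁ hsym₂ h
end

section
/- If X1 and X2 are random variables with symmetric distributions and Δ^Q_p(X1) = Δ^Q_p(X2) (finite) for all p in (1/2,1), then X1 and X2 have the same distribution. -/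
open MeasureTheory Set

/-- The right-quantile `Q_p(X) = inf {x | P(X ≤ x) > p}`. -/
noncomputable def rightQuantile {Ω : Type*} [MeasurableSpace Ω] (μ : Measure Ω)
    (X : Ω → ℝ) (p : ℝ) : ℝ :=
  sInf {x : ℝ | p < (μ {ω | X ω ≤ x}).toReal}

/-- The left-quantile `Q^-_p(X) = inf {x | P(X ≤ x) ≥ p}`. -/
noncomputable def leftQuantile {Ω : Type*} [MeasurableSpace Ω] (μ : Measure Ω)
    (X : Ω → ℝ) (p : ℝ) : ℝ :=
  sInf {x : ℝ | p ≤ (μ {ω | X ω ≤ x}).toReal}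

/-!
For a symmetric law `Q_p = -Q^-_{1-p}`, so `Δ^Q_p = -2 Q^-_{1-p}` and the hypothesis says
that the left quantiles agree on `(0, 1/2)`. Since `Q_q = lim_{r ↓ q} Q^-_r`, the right
quantiles then agree on `(0, 1/2)` as well, and symmetry carries this over to the left
quantiles on `(1/2, 1)`. Left quantiles that agree on the dense set `(0, 1) \ {1/2}` determine
the cdf through the Galois connection `Q^-_p ≤ x ↔ p ≤ F(x)`.
-/

open ProbabilityTheory Filter

theorem csInf_eq_csSup_of_forall_le_of_forall_mem_or_mem {α : Type*}
    [ConditionallyCompleteLinearOrder α] [DenselyOrdered α] {A T : Set α}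
    (hA : A.Nonempty) (hT : T.Nonempty) (hle : ∀ t ∈ T, ∀ a ∈ A, t ≤ a)
    (hcover : ∀ x, x ∈ A ∨ x ∈ T) : sInf A = sSup T := by
  obtain ⟨a₀, ha₀⟩ := hA
  obtain ⟨t₀, ht₀⟩ := hT
  refine le_antisymm (le_of_not_gt fun hlt => ?_)
    (csSup_le ⟨t₀, ht₀⟩ fun t ht => le_csInf ⟨a₀, ha₀⟩ (hle t ht))
  obtain ⟨x, hTx, hxA⟩ := exists_between hlt
  rcases hcover x with hx | hx
  · exact (csInf_le ⟨t₀, fun a ha => hle t₀ ht₀ a ha⟩ hx).not_gt hxA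
  · exact (le_csSup ⟨a₀, fun t ht => hle t ht a₀ ha₀⟩ hx).not_gt hTx

section Quantile

-- A law `ν` on `ℝ` is handled as the random variable `id` on `(ℝ, ν)`.

variable {ν : Measure ℝ} {p q x : ℝ}

theorem exists_lt_cdf (hp : p < 1) : ∃ x, p < cdf ν x :=
  ((tendsto_cdf_atTop (μ := ν)).eventually (eventually_gt_nhds hp)).exists

theorem exists_cdf_lt (hp : 0 < p) : ∃ x, cdf ν x < p :=
  ((tendsto_cdf_atBot (μ := ν)).eventually (eventually_lt_nhds hp)).exists

theorem bddBelow_setOf_le_cdf (hp : 0 < p) : BddBelow {x | p ≤ cdf ν x} := by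
  obtain ⟨y, hy⟩ := exists_cdf_lt (ν := ν) hp
  exact ⟨y, fun s hs => le_of_not_gt fun hsy => (hs.trans (monotone_cdf ν hsy.le)).not_gt hy⟩

variable [IsProbabilityMeasure ν]

theorem leftQuantile_id_eq_sInf_cdf (ν : Measure ℝ) [IsProbabilityMeasure ν] (p : ℝ) :
    leftQuantile ν id p = sInf {x | p ≤ cdf ν x} := by
  simp only [leftQuantile, cdf_eq_real, measureReal_def]
  rfl

theorem rightQuantile_id_eq_sInf_cdf (ν : Measure ℝ) [IsProbabilityMeasure ν] (p : ℝ) :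
    rightQuantile ν id p = sInf {x | p < cdf ν x} := by
  simp only [rightQuantile, cdf_eq_real, measureReal_def]
  rfl

theorem le_cdf_leftQuantile_id (hp0 : 0 < p) (hp1 : p < 1) :
    p ≤ cdf ν (leftQuantile ν id p) := by
  rw [leftQuantile_id_eq_sInf_cdf]
  have hnonempty : {x | p ≤ cdf ν x}.Nonempty := (exists_lt_cdf hp1).imp fun _ => le_of_lt
  have hright : ∀ x ∈ Ioi (sInf {x | p ≤ cdf ν x}), p ≤ cdf ν x := fun x hx => by
    obtain ⟨s, hs, hsx⟩ := (csInf_lt_iff (bddBelow_setOf_le_cdf hp0) hnonempty).1 hx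
    exact hs.trans (monotone_cdf ν hsx.le)
  exact ge_of_tendsto
    (((cdf ν).right_continuous _).mono_left (nhdsWithin_mono _ Ioi_subset_Ici_self))
    (eventually_nhdsWithin_of_forall hright)

theorem leftQuantile_id_le_iff (hp0 : 0 < p) (hp1 : p < 1) :
    leftQuantile ν id p ≤ x ↔ p ≤ cdf ν x := by
  refine ⟨fun hx => (le_cdf_leftQuantile_id hp0 hp1).trans (monotone_cdf ν hx), fun hx => ?_⟩
  rw [leftQuantile_id_eq_sInf_cdf]
  exact csInf_le (bddBelow_setOf_le_cdf hp0) hx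

theorem setOf_lt_cdf_eq {c : ℝ} (hq : 0 ≤ q) (hqc : q < c) (hc : c ≤ 1) :
    {x | q < cdf ν x} = {x | ∃ r ∈ Ioo q c, leftQuantile ν id r ≤ x} := by
  ext x
  constructor
  · intro hx
    obtain ⟨r, hqr, hr⟩ := exists_between (lt_min hx hqc)
    have hrc : r < c := hr.trans_le (min_le_right _ _)
    exact ⟨r, ⟨hqr, hrc⟩, (leftQuantile_id_le_iff (hq.trans_lt hqr) (hrc.trans_le hc)).2
      (hr.trans_le (min_le_left _ _)).le⟩
  · rintro ⟨r, ⟨hqr, hrc⟩, hrx⟩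
    exact hqr.trans_le ((leftQuantile_id_le_iff (hq.trans_lt hqr) (hrc.trans_le hc)).1 hrx)

theorem rightQuantile_id_eq_of_eqOn {ν' : Measure ℝ} [IsProbabilityMeasure ν'] {c : ℝ}
    (hq : 0 ≤ q) (hqc : q < c) (hc : c ≤ 1)
    (h : EqOn (leftQuantile ν id) (leftQuantile ν' id) (Ioo q c)) :
    rightQuantile ν id q = rightQuantile ν' id q := by
  simp only [rightQuantile_id_eq_sInf_cdf, setOf_lt_cdf_eq hq hqc hc]
  congr 1
  ext x
  exact exists_congr fun r => and_congr_right fun hr => by rw [h hr]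

theorem rightQuantile_id_eq_csSup (hp0 : 0 < p) (hp1 : p < 1) :
    rightQuantile ν id p = sSup {x | ν.real (Iio x) ≤ p} := by
  have hIio_le_cdf : ∀ x, ν.real (Iio x) ≤ cdf ν x := fun x => by
    rw [cdf_eq_real]
    exact measureReal_mono Iio_subset_Iic_self
  rw [rightQuantile_id_eq_sInf_cdf]
  refine csInf_eq_csSup_of_forall_le_of_forall_mem_or_mem (exists_lt_cdf hp1) ?_ ?_ ?_
  · obtain ⟨y, hy⟩ := exists_cdf_lt (ν := ν) hp0
    exact ⟨y, (hIio_le_cdf y).trans hy.le⟩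
  · intro t (ht : ν.real (Iio t) ≤ p) a (ha : p < cdf ν a)
    refine le_of_not_gt fun hat => (ht.trans_lt ha).not_ge ?_
    rw [cdf_eq_real]
    exact measureReal_mono fun y hy => (mem_Iic.1 hy).trans_lt hat
  · intro x
    rw [or_iff_not_imp_left]
    exact fun hx => (hIio_le_cdf x).trans (not_lt.1 hx)

theorem cdf_neg [ν.IsNegInvariant] (x : ℝ) : cdf ν (-x) = 1 - ν.real (Iio x) := by
  rw [cdf_eq_real, ← neg_Ici, measureReal_def, Measure.measure_neg, ← measureReal_def,
    ← probReal_compl_eq_one_sub measurableSet_Iio, compl_Iio]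

theorem rightQuantile_id_eq_neg_leftQuantile [ν.IsNegInvariant] (hp0 : 0 < p) (hp1 : p < 1) :
    rightQuantile ν id p = -leftQuantile ν id (1 - p) := by
  have hneg : -{x | 1 - p ≤ cdf ν x} = {x | ν.real (Iio x) ≤ p} := by
    ext x
    simp only [Set.mem_neg, mem_ofPred_eq, cdf_neg]
    constructor <;> intro h <;> linarith
  rw [rightQuantile_id_eq_csSup hp0 hp1, leftQuantile_id_eq_sInf_cdf, Real.sInf_def, hneg,
    neg_neg]

theorem cdf_le_cdf_of_leftQuantile_eqOn {ν' : Measure ℝ} [IsProbabilityMeasure ν'] {S : Set ℝ}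
    (hS : Dense S) (h : EqOn (leftQuantile ν id) (leftQuantile ν' id) (S ∩ Ioo 0 1)) (x : ℝ) :
    cdf ν x ≤ cdf ν' x := by
  by_contra! hlt
  obtain ⟨p, hpS, hp', hp⟩ := hS.exists_between hlt
  have hp0 : 0 < p := (cdf_nonneg ν' x).trans_lt hp'
  have hp1 : p < 1 := hp.trans_le (cdf_le_one ν x)
  have hν : leftQuantile ν id p ≤ x := (leftQuantile_id_le_iff hp0 hp1).2 hp.le
  rw [h ⟨hpS, hp0, hp1⟩, leftQuantile_id_le_iff hp0 hp1] at hν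
  exact hν.not_gt hp'

theorem MeasureTheory.Measure.eq_of_leftQuantile_eqOn {ν' : Measure ℝ} [IsProbabilityMeasure ν']
    {S : Set ℝ}
    (hS : Dense S) (h : EqOn (leftQuantile ν id) (leftQuantile ν' id) (S ∩ Ioo 0 1)) :
    ν = ν' :=
  Measure.eq_of_cdf ν ν' <| StieltjesFunction.ext fun x =>
    le_antisymm (cdf_le_cdf_of_leftQuantile_eqOn hS h x)
      (cdf_le_cdf_of_leftQuantile_eqOn hS h.symm x)

end Quantile

section Law

variable {Ω : Type*} [MeasurableSpace Ω] {μ : Measure Ω} {X : Ω → ℝ}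

theorem leftQuantile_map_id (hX : Measurable X) :
    leftQuantile (μ.map X) id = leftQuantile μ X := by
  ext p
  show sInf {x | p ≤ (μ.map X (Iic x)).toReal} = _
  simp only [Measure.map_apply hX measurableSet_Iic]
  rfl

theorem rightQuantile_map_id (hX : Measurable X) :
    rightQuantile (μ.map X) id = rightQuantile μ X := by
  ext p
  show sInf {x | p < (μ.map X (Iic x)).toReal} = _
  simp only [Measure.map_apply hX measurableSet_Iic]
  rfl

theorem isNegInvariant_map (hX : Measurable X) (hsym : μ.map X = μ.map (fun ω => -X ω)) :
    (μ.map X).IsNegInvariant :=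
  ⟨by rw [Measure.neg, Measure.map_map measurable_neg hX]; exact hsym.symm⟩

end Law

/-- If `X₁, X₂` are symmetrically distributed and have the same inter-quantile
difference `Δ^Q_p = Q_p - Q^-_{1-p}` for all `p ∈ (1/2,1)`, then they have the
same distribution. -/
theorem interQuantileDiff_determines_symmetric {Ω : Type*} [MeasurableSpace Ω]
    (μ : Measure Ω) [IsProbabilityMeasure μ]
    (X₁ X₂ : Ω → ℝ) (hX₁m : Measurable X₁) (hX₂m : Measurable X₂)
    (hsym₁ : Measure.map X₁ μ = Measure.map (fun ω => -X₁ ω) μ)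
    (hsym₂ : Measure.map X₂ μ = Measure.map (fun ω => -X₂ ω) μ)
    (h : ∀ p ∈ Ioo (1/2 : ℝ) 1,
      rightQuantile μ X₁ p - leftQuantile μ X₁ (1 - p)
        = rightQuantile μ X₂ p - leftQuantile μ X₂ (1 - p)) :
    Measure.map X₁ μ = Measure.map X₂ μ := by
  have := Measure.isProbabilityMeasure_map (μ := μ) hX₁m.aemeasurable
  have := Measure.isProbabilityMeasure_map (μ := μ) hX₂m.aemeasurable
  have := isNegInvariant_map hX₁m hsym₁
  have := isNegInvariant_map hX₂m hsym₂
  simp only [← leftQuantile_map_id hX₁m, ← leftQuantile_map_id hX₂m,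
    ← rightQuantile_map_id hX₁m, ← rightQuantile_map_id hX₂m] at h
  set ν₁ := μ.map X₁
  set ν₂ := μ.map X₂
  have hlow : EqOn (leftQuantile ν₁ id) (leftQuantile ν₂ id) (Ioo 0 (1/2)) := by
    rintro q ⟨hq0, hq⟩
    have hdiff := h (1 - q) ⟨by linarith, by linarith⟩
    rw [rightQuantile_id_eq_neg_leftQuantile (by linarith) (by linarith),
      rightQuantile_id_eq_neg_leftQuantile (by linarith) (by linarith), sub_sub_cancel] at hdiff
    linarith
  have hhigh : EqOn (leftQuantile ν₁ id) (leftQuantile ν₂ id) (Ioo (1/2) 1) := by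
    rintro q ⟨hq, hq1⟩
    have hright := rightQuantile_id_eq_of_eqOn (q := 1 - q) (c := 1/2)
      (by linarith) (by linarith) (by norm_num) (hlow.mono (Ioo_subset_Ioo_left (by linarith)))
    rwa [rightQuantile_id_eq_neg_leftQuantile (by linarith) (by linarith),
      rightQuantile_id_eq_neg_leftQuantile (by linarith) (by linarith), sub_sub_cancel,
      neg_inj] at hright
  refine Measure.eq_of_leftQuantile_eqOn (dense_compl_singleton (1/2 : ℝ)) ?_
  rintro q ⟨hq, hq0, hq1⟩
  rcases lt_or_gt_of_ne hq with hlt | hgt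
  · exact hlow ⟨hq0, hlt⟩
  · exact hhigh ⟨hgt, hq1⟩
end

section
/- The Gini deviation admits the mixture representation Gini-D(X) = ∫_0^1 Δ^ES_p(X) (1−p) dp for every integrable random variable X, where Gini-D(X) = (1/2)·E|X1 − X2| with X1, X2 iid copies of X. -/
open MeasureTheory Set

/-- The Expected Shortfall `ES_p(X) = (1/(1-p)) ∫_p^1 Q_r(X) dr`. -/
noncomputable def es {Ω : Type*} [MeasurableSpace Ω] (μ : Measure Ω)
    (X : Ω → ℝ) (p : ℝ) : ℝ :=
  (1 - p)⁻¹ * ∫ r in p..1, rightQuantile μ X r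

/-- The left Expected Shortfall `ES^-_p(X) = (1/p) ∫_0^p Q_r(X) dr`. -/
noncomputable def esm {Ω : Type*} [MeasurableSpace Ω] (μ : Measure Ω)
    (X : Ω → ℝ) (p : ℝ) : ℝ :=
  p⁻¹ * ∫ r in (0:ℝ)..p, rightQuantile μ X r

/-- The Gini deviation `(1/2) E|X₁ - X₂|` for `X₁, X₂` iid copies of `X`,
computed from the law of `X`. -/
noncomputable def giniDeviation {Ω : Type*} [MeasurableSpace Ω] (μ : Measure Ω)
    (X : Ω → ℝ) : ℝ :=
  (1/2) * ∫ x, ∫ y, |x - y| ∂(Measure.map X μ) ∂(Measure.map X μ)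

/-! The law `ν` of `X` is the image of Lebesgue measure on `(0, 1)` under its quantile
function `Q`, so `E|X₁ - X₂| = ∫∫ |Q u - Q v| du dv`, and since `Q` is monotone the inner integral
is `(2u - 1) Q(u) + ∫_u^1 Q - ∫_0^u Q`. On the other side `(1 - p) Δ^ES_p = ∫_p^1 Q - ∫_0^{1-p} Q`.
Exchanging the order of integration, `∫_0^1 ∫_0^p Q(r) dr dp = ∫_0^1 (1 - r) Q(r) dr`, turns
both sides into `∫_0^1 (2r - 1) Q(r) dr`. -/

open ProbabilityTheory

namespace IntervalIntegrable

variable {f : ℝ → ℝ} {a b : ℝ}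

theorem primitive (hf : IntervalIntegrable f volume a b) :
    IntervalIntegrable (fun p => ∫ r in a..p, f r) volume a b :=
  (intervalIntegral.continuousOn_primitive_interval' hf left_mem_uIcc).intervalIntegrable

theorem primitive_left (hf : IntervalIntegrable f volume a b) :
    IntervalIntegrable (fun p => ∫ r in p..b, f r) volume a b :=
  (intervalIntegral.continuousOn_primitive_interval_left
    ((intervalIntegrable_iff' (by finiteness)).1 hf)).intervalIntegrable

end IntervalIntegrable

namespace intervalIntegral

variable {f : ℝ → ℝ} {a b : ℝ}

theorem integral_integral_left_eq_integral_sub_mul (hab : a ≤ b)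
    (hf : IntervalIntegrable f volume a b) :
    ∫ p in a..b, (∫ r in a..p, f r) = ∫ r in a..b, (b - r) * f r := by
  set μ := volume.restrict (Ioc a b)
  let F : ℝ × ℝ → ℝ := {z | z.2 ≤ z.1}.indicator fun z => f z.2
  have hF : Integrable F (μ.prod μ) :=
    (((intervalIntegrable_iff_integrableOn_Ioc_of_le hab).1 hf).comp_snd μ).indicator
      (measurableSet_le measurable_snd measurable_fst)
  have inner_p : ∀ p ∈ Ioc a b, ∫ r in a..p, f r = ∫ r, F (p, r) ∂μ := fun p hp => by
    rw [integral_of_le hp.1.le, show (fun r => F (p, r)) = (Iic p).indicator f from rfl,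
      setIntegral_indicator measurableSet_Iic, Ioc_inter_Iic, inf_eq_right.2 hp.2]
  have inner_r : ∀ r ∈ Ioc a b, ∫ p, F (p, r) ∂μ = (b - r) * f r := fun r hr => by
    have hI : Ioc a b ∩ Ici r = Icc r b := by
      ext x; simp only [mem_inter_iff, mem_Ioc, mem_Ici, mem_Icc]; grind
    rw [show (fun p => F (p, r)) = (Ici r).indicator (fun _ => f r) from rfl,
      setIntegral_indicator measurableSet_Ici, hI, setIntegral_const,
      Real.volume_real_Icc_of_le hr.2, smul_eq_mul]
  rw [integral_of_le hab, integral_of_le hab, setIntegral_congr_fun measurableSet_Ioc inner_p,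
    integral_integral_swap (f := fun p r => F (p, r)) hF,
    setIntegral_congr_fun measurableSet_Ioc inner_r]

theorem integral_integral_sub_integral_eq_integral_mul (hab : a ≤ b)
    (hf : IntervalIntegrable f volume a b) :
    ∫ p in a..b, ((∫ r in p..b, f r) - ∫ r in a..p, f r) =
      ∫ r in a..b, (2 * r - a - b) * f r := by
  have hweighted : IntervalIntegrable (fun r => (b - r) * f r) volume a b :=
    hf.continuousOn_mul (by fun_prop)
  calc ∫ p in a..b, ((∫ r in p..b, f r) - ∫ r in a..p, f r)
      = ∫ p in a..b, ((∫ r in a..b, f r) - 2 * ∫ r in a..p, f r) := by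
        refine integral_congr fun p hp => ?_
        rw [← integral_interval_sub_left hf (hf.mono_set (uIcc_subset_uIcc_left hp))]
        ring
    _ = ∫ r in a..b, ((b - a) * f r - 2 * ((b - r) * f r)) := by
        rw [integral_sub intervalIntegrable_const (hf.primitive.const_mul 2),
          integral_sub (hf.const_mul _) (hweighted.const_mul 2), integral_const_mul,
          integral_const_mul, integral_const_mul,
          integral_integral_left_eq_integral_sub_mul hab hf, integral_const, smul_eq_mul]
    _ = ∫ r in a..b, (2 * r - a - b) * f r := by
        congr 1; ext r; ring

theorem integral_abs_sub_of_monotoneOn (hf : IntervalIntegrable f volume a b)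
    (hmono : MonotoneOn f (Ioo a b)) {u : ℝ} (hu : u ∈ Ioo a b) :
    ∫ v in a..b, |f u - f v| =
      (2 * u - a - b) * f u + ((∫ v in u..b, f v) - ∫ v in a..u, f v) := by
  have hu' : u ∈ uIcc a b := by rw [uIcc_of_le (hu.1.trans hu.2).le]; exact Ioo_subset_Icc_self hu
  have hau : IntervalIntegrable f volume a u := hf.mono_set (uIcc_subset_uIcc_left hu')
  have hub : IntervalIntegrable f volume u b := hf.mono_set (uIcc_subset_uIcc_right hu')
  have below : ∫ v in a..u, |f u - f v| = ∫ v in a..u, (f u - f v) := by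
    refine integral_congr_uIoo fun v hv => ?_
    rw [uIoo_of_le hu.1.le] at hv
    exact abs_of_nonneg (sub_nonneg.2 (hmono ⟨hv.1, hv.2.trans hu.2⟩ hu hv.2.le))
  have above : ∫ v in u..b, |f u - f v| = ∫ v in u..b, (f v - f u) := by
    refine integral_congr_uIoo fun v hv => ?_
    rw [uIoo_of_le hu.2.le] at hv
    rw [abs_sub_comm]
    exact abs_of_nonneg (sub_nonneg.2 (hmono hu ⟨hu.1.trans hv.1, hv.2⟩ hv.1.le))
  rw [← integral_add_adjacent_intervals (intervalIntegrable_const.sub hau).abs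
      (intervalIntegrable_const.sub hub).abs, below, above,
    integral_sub intervalIntegrable_const hau, integral_sub hub intervalIntegrable_const,
    integral_const, integral_const, smul_eq_mul, smul_eq_mul]
  ring

theorem integral_integral_sub_integral_one_sub_eq (hf : IntervalIntegrable f volume 0 1) :
    ∫ p in 0..1, ((∫ r in p..1, f r) - ∫ r in 0..(1 - p), f r) =
      ∫ r in 0..1, (2 * r - 1) * f r := by
  have hreflected : IntervalIntegrable (fun p => ∫ r in 0..(1 - p), f r) volume 0 1 := by
    simpa using (hf.primitive.comp_sub_left 1).symm
  rw [integral_sub hf.primitive_left hreflected,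
    integral_comp_sub_left (fun p => ∫ r in 0..p, f r), sub_self, sub_zero,
    ← integral_sub hf.primitive_left hf.primitive,
    integral_integral_sub_integral_eq_integral_mul zero_le_one hf]
  simp only [sub_zero]

end intervalIntegral

namespace ProbabilityTheory

noncomputable def quantile (ν : Measure ℝ) (p : ℝ) : ℝ := sInf {x | p < cdf ν x}

variable {ν : Measure ℝ} {p x : ℝ}

lemma nonempty_setOf_lt_cdf (hp : p < 1) :
    {x | p < cdf ν x}.Nonempty :=
  ((tendsto_cdf_atTop ν).eventually (eventually_gt_nhds hp)).exists

lemma bddBelow_setOf_lt_cdf (hp : 0 < p) : BddBelow {x | p < cdf ν x} := by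
  obtain ⟨x₀, hx₀⟩ := ((tendsto_cdf_atBot ν).eventually (eventually_lt_nhds hp)).exists
  exact ⟨x₀, fun y hy => not_lt.1 fun hyx =>
    hy.not_ge ((monotone_cdf ν hyx.le).trans hx₀.le)⟩

lemma quantile_le_of_lt_cdf (hp : 0 < p) (h : p < cdf ν x) : quantile ν p ≤ x :=
  csInf_le (bddBelow_setOf_lt_cdf hp) h

lemma le_cdf_of_quantile_le (hp : p ∈ Ioo 0 1) (h : quantile ν p ≤ x) :
    p ≤ cdf ν x := by
  rw [← (cdf ν).iInf_Ioi_eq x]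
  refine le_ciInf fun y => ?_
  obtain ⟨z, hz, hzy⟩ := (csInf_lt_iff (bddBelow_setOf_lt_cdf hp.1)
    (nonempty_setOf_lt_cdf hp.2)).1 (h.trans_lt y.2)
  exact hz.le.trans (monotone_cdf ν hzy.le)

lemma monotoneOn_quantile : MonotoneOn (quantile ν) (Ioo 0 1) :=
  fun _ hp _ hq hpq => le_csInf (nonempty_setOf_lt_cdf hq.2) fun _ hx =>
    quantile_le_of_lt_cdf hp.1 (hpq.trans_lt hx)

lemma aemeasurable_quantile :
    AEMeasurable (quantile ν) (volume.restrict (Ioo 0 1)) :=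
  aemeasurable_restrict_of_monotoneOn measurableSet_Ioo monotoneOn_quantile

theorem map_quantile [IsProbabilityMeasure ν] :
    (volume.restrict (Ioo 0 1)).map (quantile ν) = ν := by
  refine (Measure.ext_of_Iic ν _ fun a => ?_).symm
  rw [Measure.map_apply_of_aemeasurable aemeasurable_quantile measurableSet_Iic,
    Measure.restrict_apply' measurableSet_Ioo, ← ofReal_cdf]
  refine le_antisymm ?_ ?_
  · calc ENNReal.ofReal (cdf ν a) = volume (Ioo 0 (cdf ν a)) := by rw [Real.volume_Ioo, sub_zero]
      _ ≤ volume (quantile ν ⁻¹' Iic a ∩ Ioo 0 1) := measure_mono fun p hp =>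
        ⟨quantile_le_of_lt_cdf hp.1 hp.2, hp.1, hp.2.trans_le (cdf_le_one ν a)⟩
  · calc _ ≤ volume (Ioc 0 (cdf ν a)) :=
          measure_mono fun p hp => ⟨hp.2.1, le_cdf_of_quantile_le hp.2 hp.1⟩
      _ = ENNReal.ofReal (cdf ν a) := by rw [Real.volume_Ioc, sub_zero]

theorem integral_comp_quantile [IsProbabilityMeasure ν] {g : ℝ → ℝ}
    (hg : AEStronglyMeasurable g ν) : ∫ p in 0..1, g (quantile ν p) = ∫ x, g x ∂ν := by
  rw [← map_quantile (ν := ν)] at hg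
  rw [intervalIntegral.integral_of_le zero_le_one, integral_Ioc_eq_integral_Ioo,
    ← integral_map aemeasurable_quantile hg, map_quantile]

theorem intervalIntegrable_quantile [IsProbabilityMeasure ν] (h : Integrable id ν) :
    IntervalIntegrable (quantile ν) volume 0 1 := by
  rw [← map_quantile (ν := ν)] at h
  rw [intervalIntegrable_iff_integrableOn_Ioo_of_le zero_le_one]
  exact (integrable_map_measure h.aestronglyMeasurable aemeasurable_quantile).1 h

theorem integral_integral_abs_sub_eq_integral_quantile [IsProbabilityMeasure ν]
    (h : Integrable id ν) :
    ∫ x, ∫ y, |x - y| ∂ν ∂ν = 2 * ∫ r in 0..1, (2 * r - 1) * quantile ν r := by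
  have hQ := intervalIntegrable_quantile h
  have hmeas : AEStronglyMeasurable (fun x => ∫ y, |x - y| ∂ν) ν :=
    (continuous_abs.comp continuous_sub).stronglyMeasurable.integral_prod_right'
      |>.aestronglyMeasurable
  calc ∫ x, ∫ y, |x - y| ∂ν ∂ν
      = ∫ u in 0..1, ∫ v in 0..1, |quantile ν u - quantile ν v| := by
        rw [← integral_comp_quantile hmeas]
        refine intervalIntegral.integral_congr fun u _ => ?_
        exact (integral_comp_quantile (by fun_prop)).symm
    _ = ∫ u in 0..1, ((2 * u - 0 - 1) * quantile ν u +
          ((∫ v in u..1, quantile ν v) - ∫ v in 0..u, quantile ν v)) :=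
        intervalIntegral.integral_congr_uIoo fun u hu =>
          intervalIntegral.integral_abs_sub_of_monotoneOn hQ monotoneOn_quantile
            (by rwa [uIoo_of_le zero_le_one] at hu)
    _ = 2 * ∫ r in 0..1, (2 * r - 1) * quantile ν r := by
        rw [intervalIntegral.integral_add (hQ.continuousOn_mul (by fun_prop))
            (hQ.primitive_left.sub hQ.primitive),
          intervalIntegral.integral_integral_sub_integral_eq_integral_mul zero_le_one hQ]
        simp only [sub_zero]
        ring

end ProbabilityTheory

lemma rightQuantile_eq_quantile_map {Ω : Type*} [MeasurableSpace Ω] {μ : Measure Ω}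
    [IsProbabilityMeasure μ] {X : Ω → ℝ} (hX : AEMeasurable X μ) :
    rightQuantile μ X = quantile (μ.map X) := by
  have := Measure.isProbabilityMeasure_map hX
  ext p
  refine congrArg sInf (ext fun x => ?_)
  rw [mem_ofPred_eq, mem_ofPred_eq, cdf_eq_real, measureReal_def,
    Measure.map_apply_of_aemeasurable hX measurableSet_Iic]
  rfl

lemma es_sub_esm_one_sub_mul {Ω : Type*} [MeasurableSpace Ω] (μ : Measure Ω) (X : Ω → ℝ)
    (p : ℝ) :
    (es μ X p - esm μ X (1 - p)) * (1 - p) =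
      (∫ r in p..1, rightQuantile μ X r) - ∫ r in 0..(1 - p), rightQuantile μ X r := by
  rcases eq_or_ne p 1 with rfl | hp
  · simp
  · have : 1 - p ≠ 0 := sub_ne_zero.2 hp.symm
    rw [es, esm]
    field_simp

theorem giniDeviation_eq_integral_interESDiff_general {Ω : Type*} [MeasurableSpace Ω]
    (μ : Measure Ω) [IsProbabilityMeasure μ] (X : Ω → ℝ) (hX : Integrable X μ) :
    giniDeviation μ X = ∫ p in (0:ℝ)..1, (es μ X p - esm μ X (1 - p)) * (1 - p) := by
  have := Measure.isProbabilityMeasure_map (μ := μ) hX.aemeasurable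
  have hid : Integrable id (μ.map X) :=
    (integrable_map_measure aestronglyMeasurable_id hX.aemeasurable).2 hX
  simp only [es_sub_esm_one_sub_mul]
  rw [giniDeviation, integral_integral_abs_sub_eq_integral_quantile hid,
    rightQuantile_eq_quantile_map hX.aemeasurable,
    intervalIntegral.integral_integral_sub_integral_one_sub_eq (intervalIntegrable_quantile hid)]
  ring

/-- The Gini deviation is the mixture `∫_0^1 Δ^ES_p(X) (1-p) dp` of inter-ES
differences `Δ^ES_p(X) = ES_p(X) - ES^-_{1-p}(X)`. -/
theorem giniDeviation_eq_integral_interESDiff {Ω : Type*} [MeasurableSpace Ω]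
    (μ : Measure Ω) [IsProbabilityMeasure μ] (X : Ω → ℝ) (hXm : Measurable X)
    (hX : Integrable X μ) :
    giniDeviation μ X = ∫ p in (0:ℝ)..1, (es μ X p - esm μ X (1 - p)) * (1 - p) :=
  giniDeviation_eq_integral_interESDiff_general μ X hX
end
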